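/- arXiv:2209.03269 — 2 statements merged into one kernel-verified Lean document; each statement's English description precedes it below -/
import Mathlib

section
/- Let B, B̃ ∈ ℝ^{D×d} both have full column rank d, and set E = B − B̃. Then the orthogonal projections onto their column spaces satisfy ‖B B⁺ − B̃ B̃⁺‖ ≤ min{‖E B⁺‖, ‖E B̃⁺‖}, where B⁺ = (BᵀB)^{-1}Bᵀ denotes the Moore–Penrose pseudoinverse and ‖·‖ is the spectral norm. -/
/-!
Write `P`, `Q` for the two projections and `a = ‖(1 - Q) P‖`. Splitting
`P - Q = P (1 - Q) - (1 - P) Q` into two pieces with orthogonal ranges gives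
`‖P - Q‖ ≤ max ‖(1 - Q) P‖ ‖(1 - P) Q‖`. For projections of equal rank the maximum is `a`:
if `a < 1`, then `Q` is bounded below by `√(1 - a²)` on the range of `P`, so it maps that range
onto the range of `Q`, and for `y = Q x` with `P x = x` the identity `‖y‖² = ⟪x, P y⟫` yields
`‖(1 - P) y‖ ≤ a ‖y‖`. Finally `(1 - Q) P = (1 - Q) (B - B̃) B⁺` since `(1 - Q) B̃ = 0`, and
`‖1 - Q‖ ≤ 1`.
-/

open Matrix
open scoped Matrix.Norms.L2Operator

namespace IsStarProjection

open ContinuousLinearMap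

variable {𝕜 E : Type*} [RCLike 𝕜] [NormedAddCommGroup E] [InnerProductSpace 𝕜 E] [CompleteSpace E]
  {p q : E →L[𝕜] E}

lemma inner_apply_one_sub_apply (hp : IsStarProjection p) (x y : E) :
    inner 𝕜 (p x) ((1 - p) y) = 0 := by
  rw [← adjoint_inner_right, hp.isSelfAdjoint.adjoint_eq, ← mul_apply_eq_comp,
    hp.mul_one_sub_self, _root_.zero_apply, inner_zero_right]

lemma norm_apply_sq_add_norm_one_sub_apply_sq (hp : IsStarProjection p) (x : E) :
    ‖p x‖ ^ 2 + ‖(1 - p) x‖ ^ 2 = ‖x‖ ^ 2 := by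
  have h := norm_add_sq_eq_norm_sq_add_norm_sq_of_inner_eq_zero _ _
    (hp.inner_apply_one_sub_apply x x)
  rw [← _root_.add_apply, add_sub_cancel, one_apply_eq_self] at h
  rw [sq, sq, sq, h]

lemma norm_mul_one_sub (hp : IsStarProjection p) (hq : IsStarProjection q) :
    ‖p * (1 - q)‖ = ‖(1 - q) * p‖ := by
  rw [← norm_star, star_mul, hp.isSelfAdjoint.star_eq, hq.one_sub.isSelfAdjoint.star_eq]

theorem norm_sub_le_max (hp : IsStarProjection p) (hq : IsStarProjection q) :
    ‖p - q‖ ≤ max ‖(1 - q) * p‖ ‖(1 - p) * q‖ := by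
  set c := max ‖(1 - q) * p‖ ‖(1 - p) * q‖
  have hc : 0 ≤ c := (norm_nonneg _).trans (le_max_left _ _)
  have hsplit : p - q = p * (1 - q) * (1 - q) + (1 - p) * q * -q := by
    rw [mul_assoc, hq.one_sub.isIdempotentElem.eq, mul_neg, mul_assoc, hq.isIdempotentElem.eq]
    noncomm_ring
  refine opNorm_le_bound _ hc fun x => ?_
  have hu : ‖p ((1 - q) ((1 - q) x))‖ ≤ c * ‖(1 - q) x‖ :=
    (p * (1 - q)).le_of_opNorm_le (hp.norm_mul_one_sub hq ▸ le_max_left _ _) _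
  have hv : ‖(1 - p) (q (-(q x)))‖ ≤ c * ‖q x‖ :=
    norm_neg (q x) ▸ ((1 - p) * q).le_of_opNorm_le (le_max_right _ _) _
  have horth := norm_add_sq_eq_norm_sq_add_norm_sq_of_inner_eq_zero _ _
    (hp.inner_apply_one_sub_apply ((1 - q) ((1 - q) x)) (q (-(q x))))
  have hpyth := hq.norm_apply_sq_add_norm_one_sub_apply_sq x
  rw [hsplit]
  refine le_of_pow_le_pow_left₀ two_ne_zero (by positivity) ?_
  change ‖p ((1 - q) ((1 - q) x)) + (1 - p) (q (-(q x)))‖ ^ 2 ≤ _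
  nlinarith [pow_le_pow_left₀ (norm_nonneg _) hu 2, pow_le_pow_left₀ (norm_nonneg _) hv 2,
    congrArg (c ^ 2 * ·) hpyth]

lemma inner_apply_left (hp : IsStarProjection p) (x y : E) :
    inner 𝕜 (p x) y = inner 𝕜 x (p y) := by
  rw [← adjoint_inner_right, hp.isSelfAdjoint.adjoint_eq]

lemma one_sub_sq_mul_norm_sq_le (hq : IsStarProjection q) {x : E} (hx : p x = x) :
    (1 - ‖(1 - q) * p‖ ^ 2) * ‖x‖ ^ 2 ≤ ‖q x‖ ^ 2 := by
  have hpyth := hq.norm_apply_sq_add_norm_one_sub_apply_sq x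
  have hle : ‖(1 - q) x‖ ≤ ‖(1 - q) * p‖ * ‖x‖ := by
    simpa only [mul_apply_eq_comp, hx] using ((1 - q) * p).le_opNorm x
  nlinarith [pow_le_pow_left₀ (norm_nonneg _) hle 2]

lemma norm_one_sub_apply_apply_le (hp : IsStarProjection p) (hq : IsStarProjection q)
    {x : E} (hx : p x = x) : ‖(1 - p) (q x)‖ ≤ ‖(1 - q) * p‖ * ‖q x‖ := by
  set y := q x
  set k := 1 - ‖(1 - q) * p‖ ^ 2
  have hxy : ‖y‖ ^ 2 ≤ ‖x‖ * ‖p y‖ := by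
    have h : inner 𝕜 y y = inner 𝕜 x (p y) := by
      rw [hq.inner_apply_left, ← mul_apply_eq_comp, hq.isIdempotentElem.eq, ← hx,
        hp.inner_apply_left, hx]
    calc ‖y‖ ^ 2 = RCLike.re (inner 𝕜 y y) := (inner_self_eq_norm_sq y).symm
      _ ≤ ‖inner 𝕜 x (p y)‖ := h ▸ RCLike.re_le_norm _
      _ ≤ ‖x‖ * ‖p y‖ := norm_inner_le_norm x (p y)
  have hky : k * ‖y‖ ^ 2 ≤ ‖p y‖ ^ 2 := by
    rcases le_or_gt k 0 with hk | hk
    · exact (mul_nonpos_of_nonpos_of_nonneg hk (sq_nonneg _)).trans (sq_nonneg _)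
    rcases (sq_nonneg ‖y‖).eq_or_lt with hy | hy
    · rw [← hy, mul_zero]; exact sq_nonneg _
    have hkx := one_sub_sq_mul_norm_sq_le hq hx
    refine le_of_mul_le_mul_right ?_ hy
    calc k * ‖y‖ ^ 2 * ‖y‖ ^ 2 = k * (‖y‖ ^ 2) ^ 2 := by ring
      _ ≤ k * (‖x‖ * ‖p y‖) ^ 2 := by gcongr
      _ = k * ‖x‖ ^ 2 * ‖p y‖ ^ 2 := by ring
      _ ≤ ‖p y‖ ^ 2 * ‖y‖ ^ 2 := by rw [mul_comm (‖p y‖ ^ 2)]; gcongr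
  have hpyth := hp.norm_apply_sq_add_norm_one_sub_apply_sq y
  refine le_of_pow_le_pow_left₀ two_ne_zero (by positivity) ?_
  nlinarith

lemma apply_eq_self_of_mem_range (hp : IsStarProjection p) {x : E} (hx : x ∈ p.range) :
    p x = x := by
  obtain ⟨w, rfl⟩ := hx
  exact DFunLike.congr_fun hp.isIdempotentElem.eq w

variable [FiniteDimensional 𝕜 E]

lemma exists_apply_eq_of_finrank_range_eq (hp : IsStarProjection p) (hq : IsStarProjection q)
    (hrank : Module.finrank 𝕜 p.range = Module.finrank 𝕜 q.range)
    (ha : ‖(1 - q) * p‖ < 1) (z : E) : ∃ x, p x = x ∧ q x = q z := by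
  let f : p.range →ₗ[𝕜] q.range :=
    ((q : E →ₗ[𝕜] E).domRestrict _).codRestrict _ fun x =>
      LinearMap.mem_range_self (q : E →ₗ[𝕜] E) x
  have hf : Function.Injective f := by
    refine (injective_iff_map_eq_zero f).2 fun ⟨x, hx⟩ hfx => ?_
    have hqx : q x = 0 := congrArg Subtype.val hfx
    have h := one_sub_sq_mul_norm_sq_le hq (hp.apply_eq_self_of_mem_range hx)
    rw [hqx, norm_zero, zero_pow two_ne_zero] at h
    have : ‖x‖ ^ 2 ≤ 0 := nonpos_of_mul_nonpos_right h
      (sub_pos.2 (pow_lt_one₀ (norm_nonneg _) ha two_ne_zero))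
    exact Subtype.ext (norm_eq_zero.1 (by nlinarith [norm_nonneg x]))
  obtain ⟨⟨x, hx⟩, hfx⟩ :=
    (LinearMap.injective_iff_surjective_of_finrank_eq_finrank hrank).1 hf
      ⟨q z, LinearMap.mem_range_self _ z⟩
  exact ⟨x, hp.apply_eq_self_of_mem_range hx, congrArg Subtype.val hfx⟩

theorem norm_one_sub_mul_le_of_finrank_range_eq (hp : IsStarProjection p)
    (hq : IsStarProjection q) (hrank : Module.finrank 𝕜 p.range = Module.finrank 𝕜 q.range) :
    ‖(1 - p) * q‖ ≤ ‖(1 - q) * p‖ := by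
  rcases le_or_gt 1 ‖(1 - q) * p‖ with ha | ha
  · calc ‖(1 - p) * q‖ ≤ ‖1 - p‖ * ‖q‖ := norm_mul_le _ _
      _ ≤ 1 * 1 := by gcongr; exacts [hp.one_sub.norm_le, hq.norm_le]
      _ ≤ ‖(1 - q) * p‖ := by rwa [one_mul]
  refine opNorm_le_bound _ (norm_nonneg _) fun z => ?_
  obtain ⟨x, hpx, hqx⟩ := exists_apply_eq_of_finrank_range_eq hp hq hrank ha z
  calc ‖((1 - p) * q) z‖ = ‖(1 - p) (q x)‖ := by rw [hqx]; rfl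
    _ ≤ ‖(1 - q) * p‖ * ‖q z‖ := hqx ▸ norm_one_sub_apply_apply_le hp hq hpx
    _ ≤ ‖(1 - q) * p‖ * ‖z‖ := by
      gcongr
      simpa using q.le_of_opNorm_le hq.norm_le z

theorem norm_sub_le_of_finrank_range_eq (hp : IsStarProjection p)
    (hq : IsStarProjection q) (hrank : Module.finrank 𝕜 p.range = Module.finrank 𝕜 q.range) :
    ‖p - q‖ ≤ ‖(1 - q) * p‖ :=
  (hp.norm_sub_le_max hq).trans
    (max_le le_rfl (hp.norm_one_sub_mul_le_of_finrank_range_eq hq hrank))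

end IsStarProjection

namespace Matrix

lemma isUnit_of_rank_eq_card {n K : Type*} [Fintype n] [DecidableEq n] [Field K]
    {A : Matrix n n K} (h : A.rank = Fintype.card n) : IsUnit A := by
  rw [← mulVec_surjective_iff_isUnit, ← coe_mulVecLin, ← LinearMap.range_eq_top]
  exact Submodule.eq_top_of_finrank_eq (by rw [← rank, h, Module.finrank_fintype_fun_eq_card])

section Pinv

variable {m n K : Type*} [Fintype m] [Fintype n] [DecidableEq n] [Field K] [StarRing K]
  {B : Matrix m n K}

lemma mul_pinv_mul_self (hB : IsUnit (Bᴴ * B)) : B * ((Bᴴ * B)⁻¹ * Bᴴ) * B = B := by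
  rw [Matrix.mul_assoc, Matrix.mul_assoc, nonsing_inv_mul _ ((isUnit_iff_isUnit_det _).1 hB),
    Matrix.mul_one]

lemma isStarProjection_mul_pinv (hB : IsUnit (Bᴴ * B)) :
    IsStarProjection (B * ((Bᴴ * B)⁻¹ * Bᴴ)) where
  isIdempotentElem := by
    rw [IsIdempotentElem, ← Matrix.mul_assoc, mul_pinv_mul_self hB]
  isSelfAdjoint := by
    simp only [IsSelfAdjoint, star_eq_conjTranspose, conjTranspose_mul, conjTranspose_nonsing_inv,
      conjTranspose_conjTranspose, Matrix.mul_assoc]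

lemma rank_mul_pinv (hB : IsUnit (Bᴴ * B)) : (B * ((Bᴴ * B)⁻¹ * Bᴴ)).rank = B.rank := by
  refine (rank_mul_le_left _ _).antisymm ?_
  conv_lhs => rw [← mul_pinv_mul_self hB]
  exact rank_mul_le_left _ _

end Pinv

variable {𝕜 m n : Type*} [RCLike 𝕜] [Fintype m] [Fintype n] [DecidableEq n]

open scoped ComplexOrder in
lemma isUnit_conjTranspose_mul_self {B : Matrix m n 𝕜} (h : B.rank = Fintype.card n) :
    IsUnit (Bᴴ * B) :=
  isUnit_of_rank_eq_card (by rw [rank_conjTranspose_mul_self, h])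

variable [DecidableEq m]

lemma rank_eq_finrank_range_toEuclideanCLM (A : Matrix n n 𝕜) :
    A.rank = Module.finrank 𝕜 (toEuclideanCLM (n := n) (𝕜 := 𝕜) A).range :=
  rank_eq_finrank_range_toLin A (EuclideanSpace.basisFun n 𝕜).toBasis
    (EuclideanSpace.basisFun n 𝕜).toBasis

theorem norm_sub_le_of_rank_eq {P Q : Matrix n n 𝕜} (hP : IsStarProjection P)
    (hQ : IsStarProjection Q) (hrank : P.rank = Q.rank) : ‖P - Q‖ ≤ ‖(1 - Q) * P‖ := by
  simpa only [← l2_opNorm_toEuclideanCLM, map_sub, map_mul, map_one] using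
    (hP.map toEuclideanCLM).norm_sub_le_of_finrank_range_eq (hQ.map toEuclideanCLM)
      (by rwa [← rank_eq_finrank_range_toEuclideanCLM, ← rank_eq_finrank_range_toEuclideanCLM])

theorem norm_mul_pinv_sub_le {B Bt : Matrix m n 𝕜} (hB : B.rank = Fintype.card n)
    (hBt : Bt.rank = Fintype.card n) :
    ‖B * ((Bᴴ * B)⁻¹ * Bᴴ) - Bt * ((Btᴴ * Bt)⁻¹ * Btᴴ)‖ ≤ ‖(B - Bt) * ((Bᴴ * B)⁻¹ * Bᴴ)‖ := by
  have hBu := isUnit_conjTranspose_mul_self hB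
  have hBtu := isUnit_conjTranspose_mul_self hBt
  set X := (Bᴴ * B)⁻¹ * Bᴴ
  set Q := Bt * ((Btᴴ * Bt)⁻¹ * Btᴴ)
  have hQ : IsStarProjection Q := isStarProjection_mul_pinv hBtu
  have hQBt : (1 - Q) * Bt = 0 := by
    rw [Matrix.sub_mul, Matrix.one_mul, mul_pinv_mul_self hBtu, sub_self]
  calc ‖B * X - Q‖ ≤ ‖(1 - Q) * (B * X)‖ :=
        norm_sub_le_of_rank_eq (isStarProjection_mul_pinv hBu) hQ
          (by rw [rank_mul_pinv hBu, rank_mul_pinv hBtu, hB, hBt])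
    _ = ‖(1 - Q) * ((B - Bt) * X)‖ := by
      rw [Matrix.sub_mul B Bt X, Matrix.mul_sub, ← Matrix.mul_assoc _ Bt, hQBt, Matrix.zero_mul,
        sub_zero]
    _ ≤ ‖1 - Q‖ * ‖(B - Bt) * X‖ := l2_opNorm_mul _ _
    _ ≤ ‖(B - Bt) * X‖ := mul_le_of_le_one_left (norm_nonneg _) hQ.one_sub.norm_le

end Matrix

/-- projection perturbation bound.  For full column rank `B`, `B̃`
with pseudoinverses `B⁺ = (BᵀB)⁻¹Bᵀ`, the orthogonal projections onto the column
spaces satisfy `‖B B⁺ − B̃ B̃⁺‖ ≤ min {‖E B⁺‖, ‖E B̃⁺‖}` where `E = B − B̃`. -/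
theorem stmt2 (D d : ℕ) (B Bt : Matrix (Fin D) (Fin d) ℝ)
    (hB : B.rank = d) (hBt : Bt.rank = d) :
    ‖B * ((Bᵀ * B)⁻¹ * Bᵀ) - Bt * ((Btᵀ * Bt)⁻¹ * Btᵀ)‖ ≤
      min ‖(B - Bt) * ((Bᵀ * B)⁻¹ * Bᵀ)‖ ‖(B - Bt) * ((Btᵀ * Bt)⁻¹ * Btᵀ)‖ := by
  simp only [← conjTranspose_eq_transpose_of_trivial]
  have hB' := hB.trans (Fintype.card_fin d).symm
  have hBt' := hBt.trans (Fintype.card_fin d).symm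
  refine le_min (norm_mul_pinv_sub_le hB' hBt') ?_
  rw [norm_sub_rev, ← neg_sub Bt B, Matrix.neg_mul, norm_neg]
  exact norm_mul_pinv_sub_le hBt' hB'
end

section
/- Let f : ℝ^D → ℝ satisfy the descent inequality |f(y) − f(x) − ⟨∇f(x), y − x⟩| ≤ (L/2)‖y − x‖² on a convex set C, and let R : T → ℝ^D satisfy, for a fixed r ∈ C with R(0) = r: (i) ‖R(ξ) − r‖ ≤ α‖ξ‖, (ii) ‖R(ξ) − r − ξ − v(ξ)‖ ≤ β‖ξ‖², and (iii) ⟨∇f(r), ξ + v(ξ)⟩ = ⟨g, ξ + v(ξ)⟩ where g = Π(∇f(r)) for an orthogonal projection Π with ξ + v(ξ) in its range, and suppose ‖∇f(r)‖ ≤ G. Then for all ξ with R(ξ) ∈ C and ‖ξ‖ ≤ Q: |f(R(ξ)) − f(r) − ⟨g, ξ + v(ξ)⟩| ≤ (L̃/2)‖ξ‖² with L̃ = L·α² + 2G·β. -/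
/-!
By (iii) the linear term may be taken against `∇f(r)` instead of `g`. Replacing the direction
`ξ + v(ξ)` by `R(ξ) − r` then costs at most `‖∇f(r)‖ · β‖ξ‖²` by (ii), and what remains is the
descent remainder at `r`, bounded by `(L/2)‖R(ξ) − r‖² ≤ (Lα²/2)‖ξ‖²` by (i).
-/

theorem abs_sub_inner_le_add_norm_mul {E : Type*} [NormedAddCommGroup E]
    [InnerProductSpace ℝ E] (a : ℝ) (u y w : E) :
    |a - inner ℝ u w| ≤ |a - inner ℝ u y| + ‖u‖ * ‖y - w‖ := by
  have hsplit : a - inner ℝ u w = (a - inner ℝ u y) + inner ℝ u (y - w) := by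
    rw [inner_sub_right]; ring
  rw [hsplit]
  exact (abs_add_le _ _).trans (add_le_add_right (abs_real_inner_le_norm u _) _)

theorem stmt12_general (D : ℕ) (C : Set (EuclideanSpace ℝ (Fin D)))
    (f : EuclideanSpace ℝ (Fin D) → ℝ)
    (f' : EuclideanSpace ℝ (Fin D) → EuclideanSpace ℝ (Fin D))
    (L α β G Q : ℝ) (hL : 0 ≤ L)
    (hdesc : ∀ x ∈ C, ∀ y ∈ C,
      |f y - f x - (inner ℝ (f' x) (y - x) : ℝ)| ≤ L / 2 * ‖y - x‖ ^ 2)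
    (R : EuclideanSpace ℝ (Fin D) → EuclideanSpace ℝ (Fin D))
    (v : EuclideanSpace ℝ (Fin D) → EuclideanSpace ℝ (Fin D))
    (r : EuclideanSpace ℝ (Fin D)) (hr : r ∈ C)
    (g : EuclideanSpace ℝ (Fin D))
    (hi : ∀ ξ, ‖R ξ - r‖ ≤ α * ‖ξ‖)
    (hii : ∀ ξ, ‖R ξ - r - ξ - v ξ‖ ≤ β * ‖ξ‖ ^ 2)
    (hiii : ∀ ξ, (inner ℝ (f' r) (ξ + v ξ) : ℝ) = inner ℝ g (ξ + v ξ))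
    (hgrad : ‖f' r‖ ≤ G) :
    ∀ ξ, R ξ ∈ C → ‖ξ‖ ≤ Q →
      |f (R ξ) - f r - (inner ℝ g (ξ + v ξ) : ℝ)| ≤
        (L * α ^ 2 + 2 * G * β) / 2 * ‖ξ‖ ^ 2 := by
  intro ξ hRC _
  have hdescent : |f (R ξ) - f r - inner ℝ (f' r) (R ξ - r)| ≤ L / 2 * (α * ‖ξ‖) ^ 2 :=
    (hdesc r hr _ hRC).trans <| mul_le_mul_of_nonneg_left
      (pow_le_pow_left₀ (norm_nonneg _) (hi ξ) 2) (by positivity)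
  have hcorrection : ‖f' r‖ * ‖R ξ - r - (ξ + v ξ)‖ ≤ G * (β * ‖ξ‖ ^ 2) := by
    rw [← sub_sub]
    exact mul_le_mul hgrad (hii ξ) (norm_nonneg _) ((norm_nonneg _).trans hgrad)
  calc |f (R ξ) - f r - inner ℝ g (ξ + v ξ)|
      = |f (R ξ) - f r - inner ℝ (f' r) (ξ + v ξ)| := by rw [hiii]
    _ ≤ |f (R ξ) - f r - inner ℝ (f' r) (R ξ - r)| + ‖f' r‖ * ‖R ξ - r - (ξ + v ξ)‖ :=
      abs_sub_inner_le_add_norm_mul _ _ _ _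
    _ ≤ L / 2 * (α * ‖ξ‖) ^ 2 + G * (β * ‖ξ‖ ^ 2) := add_le_add hdescent hcorrection
    _ = (L * α ^ 2 + 2 * G * β) / 2 * ‖ξ‖ ^ 2 := by ring

/-- Lemma 3.7, Lipschitz-type gradient for pullbacks: under the
descent inequality for `f` on a convex set `C`, the retraction bounds (i),(ii)
and the projection identity (iii) with `g = Π(∇f r)` and `‖∇f r‖ ≤ G`, the
pullback satisfies `|f(R ξ) − f(r) − ⟨g, ξ + v(ξ)⟩| ≤ (L̃/2)‖ξ‖²` with
`L̃ = Lα² + 2Gβ`, for all `ξ` with `R ξ ∈ C` and `‖ξ‖ ≤ Q`. -/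
theorem stmt12 (D : ℕ) (C : Set (EuclideanSpace ℝ (Fin D)))
    (hC : Convex ℝ C)
    (f : EuclideanSpace ℝ (Fin D) → ℝ)
    (f' : EuclideanSpace ℝ (Fin D) → EuclideanSpace ℝ (Fin D))
    (L α β G Q : ℝ) (hL : 0 ≤ L) (hα : 0 < α) (hβ : 0 < β)
    (hG : 0 < G) (hQ : 0 < Q)
    (hdesc : ∀ x ∈ C, ∀ y ∈ C,
      |f y - f x - (inner ℝ (f' x) (y - x) : ℝ)| ≤ L / 2 * ‖y - x‖ ^ 2)
    (R : EuclideanSpace ℝ (Fin D) → EuclideanSpace ℝ (Fin D))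
    (v : EuclideanSpace ℝ (Fin D) → EuclideanSpace ℝ (Fin D))
    (r : EuclideanSpace ℝ (Fin D)) (hr : r ∈ C) (hR0 : R 0 = r)
    (P : EuclideanSpace ℝ (Fin D) →L[ℝ] EuclideanSpace ℝ (Fin D))
    (hPidem : P ∘L P = P)
    (hPsa : ∀ x y, (inner ℝ (P x) y : ℝ) = inner ℝ x (P y))
    (g : EuclideanSpace ℝ (Fin D)) (hg : g = P (f' r))
    (hi : ∀ ξ, ‖R ξ - r‖ ≤ α * ‖ξ‖)
    (hii : ∀ ξ, ‖R ξ - r - ξ - v ξ‖ ≤ β * ‖ξ‖ ^ 2)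
    (hiii : ∀ ξ, (inner ℝ (f' r) (ξ + v ξ) : ℝ) = inner ℝ g (ξ + v ξ))
    (hgrad : ‖f' r‖ ≤ G) :
    ∀ ξ, R ξ ∈ C → ‖ξ‖ ≤ Q →
      |f (R ξ) - f r - (inner ℝ g (ξ + v ξ) : ℝ)| ≤
        (L * α ^ 2 + 2 * G * β) / 2 * ‖ξ‖ ^ 2 :=
  stmt12_general D C f f' L α β G Q hL hdesc R v r hr g hi hii hiii hgrad
end
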